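/- Let T be a sound, recursively axiomatized extension of elementary arithmetic. There is no recursive monotone function g on arithmetic sentences such that for all consistent sentences φ: (1) φ ∧ Con_T(φ) strictly implies g(φ), and (2) g(φ) strictly implies φ. -/
import Mathlib


open FirstOrder FirstOrder.Language

namespace ArithFormalization

/-- Function symbols of the first-order language of arithmetic: `0`, successor, `+`, `·`. -/
inductive Func : ℕ → Type
  | zero : Func 0
  | succ : Func 1
  | add : Func 2
  | mul : Func 2
  deriving DecidableEq

/-- Relation symbols of the first-order language of arithmetic: `≤`. -/
inductive Rel : ℕ → Type
  | le : Rel 2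
  deriving DecidableEq

/-- The first-order language of arithmetic. -/
def L : Language := ⟨Func, Rel⟩

/-- The standard model of arithmetic: `ℕ` as an `L`-structure. -/
instance natStructure : L.Structure ℕ where
  funMap {n} f v :=
    match f with
    | .zero => 0
    | .succ => v 0 + 1
    | .add => v 0 + v 1
    | .mul => v 0 * v 1
  RelMap {n} r v :=
    match r with
    | .le => v 0 ≤ v 1

instance : Encodable (Σ n, L.Functions n) :=
  Encodable.ofEquiv (Fin 4)
    { toFun := fun x =>
        match x with
        | ⟨_, .zero⟩ => 0
        | ⟨_, .succ⟩ => 1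
        | ⟨_, .add⟩ => 2
        | ⟨_, .mul⟩ => 3
      invFun := ![⟨0, .zero⟩, ⟨1, .succ⟩, ⟨2, .add⟩, ⟨2, .mul⟩]
      left_inv := by rintro ⟨_, f⟩ <;> cases f <;> rfl
      right_inv := by decide }

instance : Encodable (Σ n, L.Relations n) :=
  Encodable.ofEquiv (Fin 1)
    { toFun := fun _ => 0
      invFun := ![⟨2, .le⟩]
      left_inv := by rintro ⟨_, r⟩ <;> cases r <;> rfl
      right_inv := by decide }

/-- Sentences of the language of arithmetic. -/
abbrev Sent : Type := L.Sentence

/-- A canonical Gödel numbering of sentences of arithmetic. -/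
def gnum (φ : Sent) : ℕ :=
  Encodable.encode (BoundedFormula.listEncode φ)

/-- `φ` is true in the standard model `ℕ`. -/
def TrueInN (φ : Sent) : Prop := ℕ ⊨ φ

/-- `Prov T φ`: `φ` is provable from the theory `T` (by Gödel's completeness theorem,
provability coincides with semantic consequence). -/
def Prov (T : L.Theory) (φ : Sent) : Prop := T ⊨ᵇ φ

/-- `Implies T φ ψ`: `φ` implies `ψ` over `T`, i.e. `T + φ ⊢ ψ`. -/
def Implies (T : L.Theory) (φ ψ : Sent) : Prop := Prov (T ∪ {φ}) ψ

/-- `φ` strictly implies `ψ` over `T`. -/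
def StrictlyImplies (T : L.Theory) (φ ψ : Sent) : Prop :=
  Implies T φ ψ ∧ ¬ Implies T ψ φ

/-- The theory `T + φ` is consistent. -/
def ConsistentWith (T : L.Theory) (φ : Sent) : Prop := ¬ Implies T φ ⊥

/-- `[φ]_T = [ψ]_T`: `φ` and `ψ` are `T`-provably equivalent. -/
def EquivMod (T : L.Theory) (φ ψ : Sent) : Prop := Prov T (φ ⇔ ψ)

/-- The theory `T` is sound, i.e. all of its axioms are true in `ℕ`. -/
def Sound (T : L.Theory) : Prop := ∀ φ ∈ T, TrueInN φ

/-- The theory `T` is recursively axiomatized: membership of (Gödel codes of) axioms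
is decided by a total recursive function. -/
def RecursivelyAxiomatized (T : L.Theory) : Prop :=
  ∃ f : ℕ → Bool, Computable f ∧ ∀ φ : Sent, (φ ∈ T ↔ f (gnum φ) = true)

/-- A function on sentences is recursive if it is computed by a total recursive
function on Gödel codes. -/
def RecursiveFn (g : Sent → Sent) : Prop :=
  ∃ f : ℕ → ℕ, Computable f ∧ ∀ φ : Sent, f (gnum φ) = gnum (g φ)

/-- `g` is monotone over `T`: if `T ⊢ φ → ψ` then `T ⊢ g(φ) → g(ψ)`. -/
def Monotone' (T : L.Theory) (g : Sent → Sent) : Prop :=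
  ∀ φ ψ : Sent, Prov T (φ ⟹ ψ) → Prov T (g φ ⟹ g ψ)

/-- The atomic formula `t ≤ u`. -/
def leF {n : ℕ} (t u : L.Term (Empty ⊕ Fin n)) : L.BoundedFormula Empty n :=
  Relations.boundedFormula₂ (Rel.le : L.Relations 2) t u

/-- `Δ₀` (bounded) formulas of arithmetic: built from atomic formulas by propositional
connectives and bounded quantification `∀ x ≤ t`, `∃ x ≤ t`. -/
inductive IsDelta0 : ∀ {n : ℕ}, L.BoundedFormula Empty n → Prop
  | falsum {n} : IsDelta0 (n := n) ⊥
  | equal {n} (t u : L.Term (Empty ⊕ Fin n)) : IsDelta0 (t.bdEqual u)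
  | le {n} (t u : L.Term (Empty ⊕ Fin n)) : IsDelta0 (leF t u)
  | imp {n} {φ ψ : L.BoundedFormula Empty n} :
      IsDelta0 φ → IsDelta0 ψ → IsDelta0 (φ.imp ψ)
  | ball {n} (t : L.Term (Empty ⊕ Fin n)) {φ : L.BoundedFormula Empty (n + 1)} :
      IsDelta0 φ →
      IsDelta0 (((leF (Term.var (Sum.inr (Fin.last n)))
        (t.relabel (Sum.map id Fin.castSucc))).imp φ).all)
  | bex {n} (t : L.Term (Empty ⊕ Fin n)) {φ : L.BoundedFormula Empty (n + 1)} :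
      IsDelta0 φ →
      IsDelta0 (((leF (Term.var (Sum.inr (Fin.last n)))
        (t.relabel (Sum.map id Fin.castSucc))) ⊓ φ).ex)

/-- `φ` is a `Π₁` sentence: a block of universal quantifiers followed by a `Δ₀` matrix. -/
def IsPi1 (φ : Sent) : Prop :=
  ∃ (n : ℕ) (θ : L.BoundedFormula Empty n), IsDelta0 θ ∧ φ = θ.alls

/-- `φ` is a `Σ₁` sentence: a block of existential quantifiers followed by a `Δ₀` matrix. -/
def IsSigma1 (φ : Sent) : Prop :=
  ∃ (n : ℕ) (θ : L.BoundedFormula Empty n), IsDelta0 θ ∧ φ = θ.exs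

/-- Close the last `m` free variables of a bounded formula by universal quantifiers. -/
def allsFrom : ∀ (n m : ℕ), L.BoundedFormula Empty (n + m) → L.BoundedFormula Empty n
  | _, 0, φ => φ
  | n, m + 1, φ => allsFrom n m φ.all

/-- `φ` is a `Σ₂` sentence: `∃-block ∀-block Δ₀`. -/
def IsSigma2 (φ : Sent) : Prop :=
  ∃ (n m : ℕ) (θ : L.BoundedFormula Empty (n + m)), IsDelta0 θ ∧ φ = (allsFrom n m θ).exs

/-- Hypotheses making `ea` a correct stand-in for elementary arithmetic `EA`:
it is sound, recursively axiomatized, and proves every true `Σ₁` sentence. -/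
structure IsEA (ea : L.Theory) : Prop where
  sound : Sound ea
  recAx : RecursivelyAxiomatized ea
  sigma1_complete : ∀ φ : Sent, IsSigma1 φ → TrueInN φ → Prov ea φ

/-- Hypotheses making `con` a correct stand-in for the arithmetized consistency operator
`φ ↦ Con_T(φ)` (`Con` of the theory `T + φ`): each value is `Π₁`, its truth in `ℕ`
expresses exactly the consistency of `T + φ`, consistency statements are `T`-provably
antitone in the strength of `φ`, and Gödel's second incompleteness theorem holds for it. -/
structure IsConOperator (T : L.Theory) (con : Sent → Sent) : Prop where
  pi1 : ∀ φ, IsPi1 (con φ)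
  true_iff : ∀ φ, TrueInN (con φ) ↔ ConsistentWith T φ
  prov_mono : ∀ φ ψ, Implies T φ ψ → Prov T (con φ ⟹ con ψ)
  goedel2 : ∀ φ, ConsistentWith T φ → ¬ Implies T φ (con φ)


/-- The theory `T` is consistent. -/
def Consistent (T : L.Theory) : Prop := ¬ Prov T ⊥

/-- Helper: unfold `Implies` to quantification over models of `T ∪ {φ}`. -/
lemma implies_iff (T : L.Theory) (φ ψ : Sent) :
    Implies T φ ψ ↔ ∀ M : Theory.ModelType.{0, 0, 0} (T ∪ {φ} : L.Theory), M ⊨ ψ := by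
  unfold Implies Prov
  exact Theory.models_sentence_iff

/-- For `T` a sound, recursively axiomatized extension of elementary
arithmetic, there is no recursive monotone function `g` such that for all consistent `φ`:
(1) `φ ∧ Con_T(φ)` strictly implies `g(φ)`, and (2) `g(φ)` strictly implies `φ`. -/
theorem statement_1
    (T ea : L.Theory) (hT_sound : Sound T) (hT_rec : RecursivelyAxiomatized T)
    (hea : IsEA ea) (hext : ea ⊆ T)
    (con : Sent → Sent) (hcon : IsConOperator T con) :
    ¬ ∃ g : Sent → Sent, RecursiveFn g ∧ Monotone' T g ∧
      ∀ φ : Sent, ConsistentWith T φ →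
        StrictlyImplies T (φ ⊓ con φ) (g φ) ∧ StrictlyImplies T (g φ) φ := by
  rintro ⟨g, -, hmono, hg⟩
  haveI hNT : ℕ ⊨ T := ⟨fun φ hφ => hT_sound φ hφ⟩
  -- `⊤` is consistent with `T`, since `ℕ` is a model.
  have htopcons : ConsistentWith T (⊤ : Sent) := by
    intro h
    haveI : ℕ ⊨ (T ∪ {(⊤ : Sent)} : L.Theory) :=
      Theory.model_union_iff.2 ⟨hNT, Theory.model_singleton_iff.2
        (by simp only [Sentence.Realize, Formula.Realize, BoundedFormula.realize_top])⟩
    exact (implies_iff T ⊤ ⊥).1 h (Theory.ModelType.of _ ℕ)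
  have h2top : ¬ Implies T (⊤ : Sent) (g ⊤) := (hg ⊤ htopcons).2.2
  -- `∼ g ⊤` is consistent with `T`.
  have hnegcons : ConsistentWith T (∼ (g ⊤)) := by
    intro h
    apply h2top
    rw [implies_iff] at h ⊢
    intro M
    by_contra hM
    haveI : (M : Type) ⊨ (T ∪ {∼ (g ⊤)} : L.Theory) :=
      Theory.model_union_iff.2
        ⟨M.is_model.mono Set.subset_union_left,
         Theory.model_singleton_iff.2 ((Sentence.realize_not _).2 hM)⟩
    exact h (Theory.ModelType.of _ M)
  obtain ⟨s1, s2⟩ := hg (∼ (g ⊤)) hnegcons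
  -- by monotonicity, `g (∼ g ⊤)` implies `g ⊤` over `T`
  have hmon : Prov T ((g (∼ (g ⊤))) ⟹ g ⊤) := by
    apply hmono
    rw [Prov, Theory.models_sentence_iff]
    intro M
    simp only [Sentence.Realize, Formula.Realize, BoundedFormula.realize_imp,
      BoundedFormula.realize_top]
    intro _
    trivial
  -- hence `T + g (∼ g ⊤)` is inconsistent, so it implies everything,
  -- contradicting the strictness in (1).
  apply s1.2
  rw [implies_iff]
  intro M
  exfalso
  have hMg : (M : Type) ⊨ g (∼ (g ⊤)) :=
    Theory.model_singleton_iff.1 ((Theory.model_union_iff.1 M.is_model).2)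
  haveI : (M : Type) ⊨ T := M.is_model.mono Set.subset_union_left
  have h1 : (M : Type) ⊨ ((g (∼ (g ⊤))) ⟹ g ⊤) :=
    Theory.models_sentence_iff.1 hmon (Theory.ModelType.of T M)
  have h2 : (M : Type) ⊨ (∼ (g ⊤)) := (implies_iff T _ _).1 s2.1 M
  simp only [Sentence.Realize, Formula.Realize, BoundedFormula.realize_imp] at h1
  exact (Sentence.realize_not _).1 h2 (h1 hMg)

end ArithFormalization
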